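/- arXiv:1506.04208 — 3 statements merged into one kernel-verified Lean document; each statement's English description precedes it below -/
import Mathlib

section
/- Let A be a bounded positive operator on a separable real Hilbert space H = H1 ⊕ H2, fix an ordered orthonormal basis of H2, and set Aⁿ := Pⁿ A Pⁿ. Then for every n the pair (Aⁿ, H2) is compatible: there exists a bounded operator Q on H with Q² = Q, range Q = H2, and Aⁿ Q = Q* Aⁿ. -/
/-!
On a finite-dimensional subspace `K`, a positive operator `A` has an `A`-orthogonal projection
`R` onto `K`: the compression of `A` to `K` is a positive operator on a finite-dimensional space,
so its range is the orthogonal complement of its kernel, and `A` kills that kernel; hence every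
`P_K A x` is attained. The truncation `Aⁿ = Pⁿ A Pⁿ` sees `H2` only through `H2ⁿ`, so with `R`
the `A`-orthogonal projection onto `H2ⁿ`, the operator `Q = P_{H2} + R P_{H1}` is an idempotent
onto `H2` with `Aⁿ (x - Q x) ⊥ H2` for all `x`, which is exactly the `Aⁿ`-symmetry of `Q`.
-/

open MeasureTheory ProbabilityTheory Filter Topology
open scoped RealInnerProductSpace

noncomputable section

variable {H : Type*} [NormedAddCommGroup H] [InnerProductSpace ℝ H] [CompleteSpace H]

/-- The orthogonal projection onto a closed subspace, viewed as a map `H → H`. -/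
def projL (S : Submodule ℝ H) [CompleteSpace S] : H →L[ℝ] H :=
  S.subtypeL.comp (S.orthogonalProjectionOnto)

/-- For an orthonormal family `e`, the orthogonal projection onto the span of
`e 0, …, e (n-1)`, viewed as a map `H → H`. -/
def projFin (e : ℕ → H) (n : ℕ) : H →L[ℝ] H :=
  ∑ i ∈ Finset.range n, (innerSL ℝ (e i)).smulRight (e i)

/-- The orthogonal projection `Pⁿ = P_{H1} + P_{H2ⁿ}` onto `H1 ⊕ H2ⁿ`. -/
def Pn (H1 : Submodule ℝ H) [CompleteSpace H1] (e : ℕ → H) (n : ℕ) : H →L[ℝ] H :=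
  projL H1 + projFin e n

open ContinuousLinearMap Submodule

section General

variable {E : Type*} [NormedAddCommGroup E] [InnerProductSpace ℝ E]

theorem ContinuousLinearMap.IsPositive.apply_eq_zero_of_inner_self_eq_zero {A : E →L[ℝ] E}
    (hA : A.IsPositive) {x : E} (hx : ⟪A x, x⟫ = 0) : A x = 0 := by
  have h_orth : ∀ y, ⟪A x, y⟫ = 0 := by
    intro y
    -- `t ↦ ⟪A (x + t • y), x + t • y⟫` is a nonnegative quadratic with no constant term.
    have hquad : ∀ t : ℝ, 0 ≤ ⟪A y, y⟫ * (t * t) + 2 * ⟪A x, y⟫ * t + 0 := by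
      intro t
      have hyx : ⟪A y, x⟫ = ⟪A x, y⟫ := by rw [hA.inner_left_eq_inner_right, real_inner_comm]
      have hnonneg := hA.inner_nonneg_left (x + t • y)
      simp only [map_add, map_smul, inner_add_left, inner_add_right, real_inner_smul_left,
        real_inner_smul_right, hx, hyx] at hnonneg
      linarith
    have hdisc := discrim_le_zero hquad
    rw [discrim] at hdisc
    nlinarith [sq_nonneg ⟪A x, y⟫]
  simpa using h_orth (A x)

theorem projFin_eq_starProjection [DecidableEq E] {e : ℕ → E} (he : Orthonormal ℝ e) (n : ℕ) :
    projFin e n = (span ℝ ((Finset.range n).image e : Set E)).starProjection := by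
  rw [(OrthonormalBasis.span he (Finset.range n)).starProjection_eq_sum_rankOne, projFin,
    ← Finset.sum_coe_sort]
  ext x
  simp

theorem ContinuousLinearMap.IsPositive.exists_apply_sub_mem_orthogonal {A : E →L[ℝ] E}
    (hA : A.IsPositive) (K : Submodule ℝ E) [FiniteDimensional ℝ K] :
    ∃ R : E →L[ℝ] E, (∀ x, R x ∈ K) ∧ ∀ x, A (x - R x) ∈ Kᗮ := by
  set C : K →L[ℝ] K := K.orthogonalProjectionOnto ∘L A ∘L K.subtypeL
  have hC : C.IsPositive := hA.orthogonalProjectionOnto_comp K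
  have hker : ∀ v ∈ LinearMap.ker (C : K →ₗ[ℝ] K), A v = 0 := by
    intro v hv
    apply hA.apply_eq_zero_of_inner_self_eq_zero
    have hCv : C v = 0 := hv
    simpa [C] using congrArg (⟪·, v⟫) hCv
  have hrange : ∀ x, K.orthogonalProjectionOnto (A x) ∈ LinearMap.range (C : K →ₗ[ℝ] K) := by
    intro x
    rw [← orthogonal_orthogonal (LinearMap.range _), hC.isSymmetric.orthogonal_range]
    intro v hv
    rw [inner_orthogonalProjectionOnto_eq_of_mem_left, ← hA.inner_left_eq_inner_right, hker v hv,
      inner_zero_left]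
  obtain ⟨g, hg⟩ := (C : K →ₗ[ℝ] K).rangeRestrict.exists_rightInverse_of_surjective
    (LinearMap.range_rangeRestrict _)
  refine ⟨K.subtypeL ∘L LinearMap.toContinuousLinearMap g ∘L
    (K.orthogonalProjectionOnto ∘L A).codRestrict _ hrange, fun x => Subtype.property _,
    fun x => ?_⟩
  rw [← orthogonalProjectionOnto_eq_zero_iff, map_sub, map_sub, sub_eq_zero]
  exact (congrArg Subtype.val (LinearMap.congr_fun hg ⟨_, hrange x⟩)).symm

variable [CompleteSpace E]

def IsCompatible (B : E →L[ℝ] E) (S : Submodule ℝ E) : Prop :=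
  ∃ Q : E →L[ℝ] E, Q * Q = Q ∧ Set.range Q = (S : Set E) ∧ B * Q = adjoint Q * B

theorem IsSelfAdjoint.mul_eq_adjoint_mul {B Q : E →L[ℝ] E} (hB : IsSelfAdjoint B)
    {S : Submodule ℝ E} (hQ : ∀ x, Q x ∈ S) (hBQ : ∀ x, B (x - Q x) ∈ Sᗮ) :
    B * Q = adjoint Q * B := by
  have hB_symm : ∀ u v, ⟪B u, v⟫ = ⟪u, B v⟫ := hB.isSymmetric
  have hsplit : ∀ x y, ⟪B (Q x), y⟫ = ⟪B (Q x), Q y⟫ := by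
    intro x y
    have h := hBQ y (Q x) (hQ x)
    rw [← hB_symm, inner_sub_right, sub_eq_zero] at h
    exact h
  have hsymm : B * Q = adjoint (B * Q) := (eq_adjoint_iff _ _).2 fun x y => by
    calc ⟪B (Q x), y⟫ = ⟪B (Q x), Q y⟫ := hsplit x y
      _ = ⟪B (Q y), Q x⟫ := by rw [real_inner_comm, hB_symm]
      _ = ⟪B (Q y), x⟫ := (hsplit y x).symm
      _ = ⟪x, B (Q y)⟫ := real_inner_comm _ _
  rw [hsymm, ← star_eq_adjoint, star_mul, hB.star_eq, star_eq_adjoint]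

theorem IsSelfAdjoint.isCompatible_orthogonal {B : E →L[ℝ] E} (hB : IsSelfAdjoint B)
    (U : Submodule ℝ E) [U.HasOrthogonalProjection] (R : E →L[ℝ] E) (hR : ∀ x, R x ∈ Uᗮ)
    (hBR : ∀ t ∈ U, B (t - R t) ∈ U) : IsCompatible B Uᗮ := by
  set Q : E →L[ℝ] E := Uᗮ.starProjection + R ∘L U.starProjection
  have hQ_mem : ∀ x, Q x ∈ Uᗮ := fun x => add_mem (Uᗮ.starProjection_apply_mem x) (hR _)
  have hQ_fix : ∀ s ∈ Uᗮ, Q s = s := fun s hs => by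
    simp [Q, (starProjection_apply_eq_zero_iff U).2 hs, starProjection_eq_self_iff.2 hs]
  have hQ_sub : ∀ x, x - Q x = U.starProjection x - R (U.starProjection x) := fun x => by
    simp only [Q, add_apply, comp_apply, starProjection_orthogonal_val]
    abel
  refine ⟨Q, ?_, ?_, hB.mul_eq_adjoint_mul hQ_mem fun x => ?_⟩
  · ext x
    exact hQ_fix _ (hQ_mem x)
  · ext s
    exact ⟨by rintro ⟨x, rfl⟩; exact hQ_mem x, fun hs => ⟨s, hQ_fix s hs⟩⟩
  · rw [hQ_sub]
    exact le_orthogonal_orthogonal U (hBR _ (U.starProjection_apply_mem x))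

end General

theorem truncation_compatible_general
    (H1 : Submodule ℝ H) [CompleteSpace H1]
    (A : H →L[ℝ] H) (hA : A.IsPositive)
    (e : ℕ → H) (he : Orthonormal ℝ e) (hemem : ∀ k, e k ∈ H1ᗮ) :
    ∀ n : ℕ, ∃ Q : H →L[ℝ] H,
      Q * Q = Q ∧ Set.range Q = (H1ᗮ : Set H) ∧
      (Pn H1 e n * A * Pn H1 e n) * Q
        = ContinuousLinearMap.adjoint Q * (Pn H1 e n * A * Pn H1 e n) := by
  intro n
  classical
  set K := span ℝ ((Finset.range n).image e : Set H)
  have hK : K ≤ H1ᗮ := span_le.2 (by simp [Set.subset_def, hemem])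
  have hH1K : H1 ≤ Kᗮ := (le_orthogonal_orthogonal H1).trans (orthogonal_le hK)
  have hPn : Pn H1 e n = H1.starProjection + K.starProjection := by
    rw [Pn, projFin_eq_starProjection he]
    rfl
  have hPn_sa : IsSelfAdjoint (Pn H1 e n) :=
    hPn ▸ (isSelfAdjoint_starProjection H1).add (isSelfAdjoint_starProjection K)
  obtain ⟨R, hRK, hAR⟩ := hA.exists_apply_sub_mem_orthogonal K
  refine (hA.isSelfAdjoint.conjugate_self hPn_sa).isCompatible_orthogonal H1 R
    (fun x => hK (hRK x)) fun t ht => ?_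
  have hfix : Pn H1 e n (t - R t) = t - R t := by
    rw [hPn, add_apply, map_sub, map_sub, starProjection_eq_self_iff.2 ht,
      (starProjection_apply_eq_zero_iff H1).2 (hK (hRK t)),
      (starProjection_apply_eq_zero_iff K).2 (hH1K ht), starProjection_eq_self_iff.2 (hRK t)]
    abel
  change Pn H1 e n (A (Pn H1 e n (t - R t))) ∈ H1
  rw [hfix, hPn, add_apply, (starProjection_apply_eq_zero_iff K).2 (hAR t), add_zero]
  exact H1.starProjection_apply_mem _

/-- For a bounded positive operator `A` on `H = H1 ⊕ H2` (with
`H2 = H1ᗮ` spanned by the ordered orthonormal basis `e`), each truncation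
`Aⁿ = Pⁿ A Pⁿ` is compatible with `H2`: there is an `Aⁿ`-symmetric oblique
projection onto `H2`. -/
theorem truncation_compatible
    (H1 : Submodule ℝ H) [CompleteSpace H1]
    (A : H →L[ℝ] H) (hA : A.IsPositive)
    (e : ℕ → H) (he : Orthonormal ℝ e) (hemem : ∀ k, e k ∈ H1ᗮ)
    (hspan : (Submodule.span ℝ (Set.range e)).topologicalClosure = H1ᗮ) :
    ∀ n : ℕ, ∃ Q : H →L[ℝ] H,
      Q * Q = Q ∧ Set.range Q = (H1ᗮ : Set H) ∧
      (Pn H1 e n * A * Pn H1 e n) * Q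
        = ContinuousLinearMap.adjoint Q * (Pn H1 e n * A * Pn H1 e n) :=
  truncation_compatible_general H1 A hA e he hemem

end
end

section
/- Let A be a bounded positive trace-class operator on a separable real Hilbert space H = H1 ⊕ H2, fix an ordered orthonormal basis of H2, and set Aⁿ := Pⁿ A Pⁿ. Let Tⁿ be a short of Aⁿ to H1 for each n and let T be a short of A to H1. Then Tⁿ and T are trace class and ‖Tⁿ − T‖₁ → 0 as n → ∞, where ‖·‖₁ denotes the trace norm. -/
/-!
Since `T` takes values in `H1`, which `Pⁿ` fixes, `T = Pⁿ T Pⁿ ≤ Pⁿ A Pⁿ`, so `T ≤ Tⁿ` by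
maximality of `Tⁿ`; likewise `Tⁿ⁺¹ ≤ Tⁿ` because `Pⁿ Pⁿ⁺¹ = Pⁿ`. A decreasing sequence of
positive operators converges strongly, here to some `L ≥ T`; `L` takes values in `H1` and, as
`Pⁿ → 1` strongly, `L ≤ A`, so `L ≤ T` by maximality of `T`. Since `Tⁿ - T ≥ 0`, uniqueness of
positive square roots gives `|Tⁿ - T| = Tⁿ - T`, whose trace `∑ ⟪(Tⁿ - T) bᵢ, bᵢ⟫` tends to `0`
by dominated convergence, dominated by the trace of `T⁰ ≤ P_{H1} A P_{H1}`, which is finite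
because `tr (R* A R) ≤ ‖R‖² tr A`.

Square roots on a real Hilbert space are obtained from the same monotone convergence theorem:
for `0 ≤ C ≤ 1` the polynomials `pₙ₊₁ = (pₙ² + X) / 2`, `p₀ = 1`, have nonnegative coefficients
and decrease at `X = 1 - C` (as `pₙ - pₙ₊₁` is `1 - X` times a polynomial with nonnegative
coefficients) to `1 - √C`.
-/

open MeasureTheory ProbabilityTheory Filter Topology
open scoped RealInnerProductSpace

noncomputable section

variable {H : Type*} [NormedAddCommGroup H] [InnerProductSpace ℝ H] [CompleteSpace H]

/-- `T` is a short of the bounded positive operator `A` to the closed subspace `S`. -/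
def IsShort (A T : H →L[ℝ] H) (S : Submodule ℝ H) : Prop :=
  T.IsPositive ∧ (A - T).IsPositive ∧ (∀ x, T x ∈ S) ∧
    ∀ X : H →L[ℝ] H, X.IsPositive → (A - X).IsPositive → (∀ x, X x ∈ S) →
      (T - X).IsPositive


namespace ContinuousLinearMap

variable {E : Type*} [NormedAddCommGroup E] [InnerProductSpace ℝ E]

lemma inner_le_inner_of_le {S T : E →L[ℝ] E} (h : S ≤ T) (x : E) : ⟪S x, x⟫ ≤ ⟪T x, x⟫ := by
  simpa [inner_sub_left] using h.inner_nonneg_left x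

lemma IsPositive.inner_sq_le {T : E →L[ℝ] E} (hT : T.IsPositive) (x y : E) :
    ⟪T x, y⟫ ^ 2 ≤ ⟪T x, x⟫ * ⟪T y, y⟫ := by
  have hsymm : ⟪T y, x⟫ = ⟪T x, y⟫ := by rw [hT.inner_left_eq_inner_right, real_inner_comm]
  have hquad : ∀ t : ℝ, 0 ≤ ⟪T y, y⟫ * (t * t) + 2 * ⟪T x, y⟫ * t + ⟪T x, x⟫ := fun t => by
    have := hT.inner_nonneg_left (x + t • y)
    simp only [map_add, map_smul, inner_add_left, inner_add_right, real_inner_smul_left,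
      real_inner_smul_right, hsymm] at this
    linarith
  have := discrim_le_zero hquad
  rw [discrim] at this
  linarith

lemma IsPositive.norm_apply_sq_le {T : E →L[ℝ] E} (hT : T.IsPositive) {M : ℝ}
    (hM : ∀ y, ⟪T y, y⟫ ≤ M * ‖y‖ ^ 2) (x : E) : ‖T x‖ ^ 2 ≤ M * ⟪T x, x⟫ := by
  have hcs := hT.inner_sq_le x (T x)
  rw [real_inner_self_eq_norm_sq] at hcs
  have hMx := hM (T x)
  have hx := hT.inner_nonneg_left x
  rcases (norm_nonneg (T x)).eq_or_lt with h0 | hpos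
  · rw [← h0, zero_pow two_ne_zero]
    rcases le_or_gt 0 M with hM0 | hM0
    · positivity
    · nlinarith [hM x, mul_nonpos_of_nonpos_of_nonneg hM0.le (sq_nonneg ‖x‖)]
  · have : (‖T x‖ ^ 2) ^ 2 ≤ (M * ⟪T x, x⟫) * ‖T x‖ ^ 2 := by nlinarith
    nlinarith [pow_pos hpos 2]

lemma inner_apply_self_le (T : E →L[ℝ] E) (x : E) : ⟪T x, x⟫ ≤ ‖T‖ * ‖x‖ ^ 2 :=
  (real_inner_le_norm _ _).trans (by nlinarith [T.le_opNorm x, norm_nonneg x])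

lemma IsPositive.apply_eq_zero_of_inner_eq_zero {T : E →L[ℝ] E} (hT : T.IsPositive) {x : E}
    (hx : ⟪T x, x⟫ = 0) : T x = 0 := by
  have := hT.norm_apply_sq_le (inner_apply_self_le T) x
  rw [hx, mul_zero] at this
  exact norm_eq_zero.mp (by nlinarith [norm_nonneg (T x)])

lemma eq_of_commute_of_mul_self_eq {R S : E →L[ℝ] E} (hR : R.IsPositive) (hS : S.IsPositive)
    (hRS : Commute R S) (h : R * R = S * S) : R = S := by
  -- `y = (R - S) x` is killed by `R + S`, hence by `R` and `S`, so `‖y‖² = ⟪x, (R - S) y⟫ = 0`.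
  ext x
  set y := (R - S) x
  have hy : R y + S y = 0 := by
    have : (R + S) * (R - S) = 0 := by rw [add_mul, mul_sub, mul_sub, h, hRS.eq]; abel
    simpa [y] using congrArg (· x) this
  have hsum : ⟪R y, y⟫ + ⟪S y, y⟫ = 0 := by rw [← inner_add_left, hy, inner_zero_left]
  have hRy0 : ⟪R y, y⟫ = 0 := by linarith [hR.inner_nonneg_left y, hS.inner_nonneg_left y]
  have hSy0 : ⟪S y, y⟫ = 0 := by linarith [hR.inner_nonneg_left y, hS.inner_nonneg_left y]
  have hRy := hR.apply_eq_zero_of_inner_eq_zero hRy0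
  have hSy := hS.apply_eq_zero_of_inner_eq_zero hSy0
  have hyy : ⟪y, y⟫ = 0 := by
    calc ⟪y, y⟫ = ⟪x, R y⟫ - ⟪x, S y⟫ := by
          simp only [y, sub_apply, inner_sub_left, hR.inner_left_eq_inner_right,
            hS.inner_left_eq_inner_right]
      _ = 0 := by rw [hRy, hSy, inner_zero_right, sub_zero]
  exact sub_eq_zero.mp (inner_self_eq_zero.mp hyy)

section StrongLimit

variable {X : ℕ → E →L[ℝ] E} {L : E →L[ℝ] E}
  (hX : ∀ x, Tendsto (fun n => X n x) atTop (𝓝 (L x)))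
include hX

lemma isPositive_of_tendsto_apply (hpos : ∀ᶠ n in atTop, (X n).IsPositive) : L.IsPositive := by
  rw [isPositive_iff]
  refine ⟨fun x y => tendsto_nhds_unique ((hX x).inner tendsto_const_nhds) ?_, fun x =>
    ge_of_tendsto ((hX x).inner tendsto_const_nhds) (hpos.mono fun n h => h.inner_nonneg_left x)⟩
  refine (tendsto_const_nhds.inner (hX y)).congr' (hpos.mono fun n h => ?_)
  exact (h.inner_left_eq_inner_right x y).symm

lemma le_of_tendsto_apply {B : E →L[ℝ] E} (h : ∀ᶠ n in atTop, B ≤ X n) : B ≤ L :=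
  isPositive_of_tendsto_apply (fun x => (hX x).sub_const (B x)) h

lemma tendsto_apply_le {B : E →L[ℝ] E} (h : ∀ᶠ n in atTop, X n ≤ B) : L ≤ B :=
  isPositive_of_tendsto_apply (fun x => (hX x).const_sub (B x)) h

lemma commute_of_tendsto_apply {W : E →L[ℝ] E} (hW : ∀ n, Commute W (X n)) : Commute W L := by
  ext x
  refine tendsto_nhds_unique ((W.continuous.tendsto _).comp (hX x)) ?_
  exact (hX (W x)).congr fun n => (congrArg (· x) (hW n).eq).symm

end StrongLimit

lemma cauchySeq_apply_of_antitone {X : ℕ → E →L[ℝ] E} (hpos : ∀ n, (X n).IsPositive)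
    (hX : Antitone X) (x : E) : CauchySeq fun n => X n x := by
  set f : ℕ → ℝ := fun n => ⟪X n x, x⟫
  have hf : CauchySeq f := by
    refine (tendsto_atTop_ciInf (fun n m hnm => inner_le_inner_of_le (hX hnm) x)
      ⟨0, ?_⟩).cauchySeq
    rintro _ ⟨n, rfl⟩
    exact (hpos n).inner_nonneg_left x
  -- For `n ≤ m`, `0 ≤ X n - X m ≤ X 0` bounds `‖X n x - X m x‖ ^ 2` by `‖X 0‖ * (f n - f m)`.
  have hdist : ∀ n m, n ≤ m → dist (X n x) (X m x) ^ 2 ≤ ‖X 0‖ * dist (f n) (f m) := by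
    intro n m hnm
    have hD : (X n - X m).IsPositive := hX hnm
    have hbound : ∀ y, ⟪(X n - X m) y, y⟫ ≤ ‖X 0‖ * ‖y‖ ^ 2 := fun y => by
      rw [sub_apply, inner_sub_left]
      linarith [inner_le_inner_of_le (hX n.zero_le) y, (hpos m).inner_nonneg_left y,
        inner_apply_self_le (X 0) y]
    have hfnm : f n - f m = ⟪(X n - X m) x, x⟫ := by simp [f, inner_sub_left]
    rw [dist_eq_norm, dist_eq_norm, hfnm, Real.norm_of_nonneg (hD.inner_nonneg_left x)]
    simpa using hD.norm_apply_sq_le hbound x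
  rw [cauchySeq_iff_tendsto_dist_atTop_0] at hf ⊢
  have hsqrt : Tendsto (fun p : ℕ × ℕ => √(‖X 0‖ * dist (f p.1) (f p.2))) atTop (𝓝 0) := by
    simpa using (hf.const_mul ‖X 0‖).sqrt
  refine squeeze_zero (fun _ => dist_nonneg) (fun p => Real.le_sqrt_of_sq_le ?_) hsqrt
  rcases le_total p.1 p.2 with h | h
  · exact hdist _ _ h
  · rw [dist_comm, dist_comm (f p.1)]
    exact hdist _ _ h

variable [CompleteSpace E]

lemma le_of_forall_inner_le {S T : E →L[ℝ] E} (hS : IsSelfAdjoint S) (hT : IsSelfAdjoint T)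
    (h : ∀ x, ⟪S x, x⟫ ≤ ⟪T x, x⟫) : S ≤ T := by
  rw [le_def, isPositive_iff']
  exact ⟨hT.sub hS, fun x => by simpa [inner_sub_left] using h x⟩

lemma eq_of_forall_inner_eq {S T : E →L[ℝ] E} (hS : IsSelfAdjoint S) (hT : IsSelfAdjoint T)
    (h : ∀ x, ⟪S x, x⟫ = ⟪T x, x⟫) : S = T :=
  le_antisymm (le_of_forall_inner_le hS hT fun x => (h x).le)
    (le_of_forall_inner_le hT hS fun x => (h x).ge)

lemma IsPositive.conj {X R : E →L[ℝ] E} (hX : X.IsPositive) (hR : IsSelfAdjoint R) :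
    (R * X * R).IsPositive := by
  simpa [hR.adjoint_eq, mul_def, comp_assoc] using hX.conj_adjoint R

lemma conj_le_conj {S T R : E →L[ℝ] E} (hR : IsSelfAdjoint R) (h : S ≤ T) :
    R * S * R ≤ R * T * R := by
  rw [le_def, ← sub_mul, ← mul_sub]
  exact IsPositive.conj h hR

lemma conj_eq_self_of_apply_mem {R T : E →L[ℝ] E} {S : Submodule ℝ E}
    (hR : IsSelfAdjoint R) (hRS : ∀ y ∈ S, R y = y) (hT : IsSelfAdjoint T)
    (hTS : ∀ x, T x ∈ S) : R * T * R = T := by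
  have hRT : R * T = T := ext fun x => hRS _ (hTS x)
  have hTR : T * R = T := by simpa [hR.star_eq, hT.star_eq] using congrArg star hRT
  rw [hRT, hTR]

lemma exists_tendsto_apply_of_antitone {X : ℕ → E →L[ℝ] E} (hpos : ∀ n, (X n).IsPositive)
    (hX : Antitone X) :
    ∃ L : E →L[ℝ] E, L.IsPositive ∧ (∀ n, L ≤ X n) ∧
      ∀ x, Tendsto (fun n => X n x) atTop (𝓝 (L x)) := by
  choose g hg using fun x => cauchySeq_tendsto_of_complete (cauchySeq_apply_of_antitone hpos hX x)
  let L := continuousLinearMapOfTendsto X (tendsto_pi_nhds.mpr hg)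
  have hL : ∀ x, Tendsto (fun n => X n x) atTop (𝓝 (L x)) := hg
  refine ⟨L, isPositive_of_tendsto_apply hL (.of_forall hpos), fun n => ?_, hL⟩
  exact tendsto_apply_le hL (eventually_ge_atTop n |>.mono fun m hm => hX hm)

end ContinuousLinearMap

open Polynomial in
def Polynomial.nonnegCoeffs : Subsemiring ℝ[X] where
  carrier := {p | ∀ k, 0 ≤ p.coeff k}
  mul_mem' {p q} hp hq k := by
    rw [coeff_mul]
    exact Finset.sum_nonneg fun _ _ => mul_nonneg (hp _) (hq _)
  one_mem' k := by
    rw [coeff_one]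
    split_ifs <;> norm_num
  add_mem' {p q} hp hq k := by
    rw [coeff_add]
    exact add_nonneg (hp k) (hq k)
  zero_mem' k := by simp

namespace Polynomial

lemma C_mem_nonnegCoeffs {c : ℝ} (hc : 0 ≤ c) : C c ∈ nonnegCoeffs := fun k => by
  rw [coeff_C]
  split_ifs <;> simp [hc]

lemma X_mem_nonnegCoeffs : (X : ℝ[X]) ∈ nonnegCoeffs := fun k => by
  rw [coeff_X]
  split_ifs <;> norm_num

/-- The iteration `p ↦ (p² + X) / 2` from `p = 1`: at `X = 1 - C` its fixed point is `1 - √C`. -/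
def sqrtIter : ℕ → ℝ[X]
  | 0 => 1
  | n + 1 => C (1 / 2) * (sqrtIter n ^ 2 + X)

lemma sqrtIter_mem_nonnegCoeffs (n : ℕ) : sqrtIter n ∈ nonnegCoeffs := by
  induction n with
  | zero => exact nonnegCoeffs.one_mem
  | succ n ih =>
    exact mul_mem (C_mem_nonnegCoeffs (by norm_num)) (add_mem (pow_mem ih 2) X_mem_nonnegCoeffs)

lemma exists_sqrtIter_sub_succ (n : ℕ) :
    ∃ d ∈ nonnegCoeffs, sqrtIter n - sqrtIter (n + 1) = d * (1 - X) := by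
  have hsucc : ∀ n, sqrtIter (n + 1) = C (1 / 2) * (sqrtIter n ^ 2 + X) := fun _ => rfl
  induction n with
  | zero =>
    refine ⟨C (1 / 2), C_mem_nonnegCoeffs (by norm_num), ?_⟩
    have hhalf : C (1 / 2 : ℝ) + C (1 / 2) = 1 := by rw [← C_add]; norm_num
    rw [hsucc, sqrtIter]
    linear_combination -hhalf
  | succ n ih =>
    obtain ⟨d, hd, hdiff⟩ := ih
    refine ⟨C (1 / 2) * (sqrtIter n + sqrtIter (n + 1)) * d,
      mul_mem (mul_mem (C_mem_nonnegCoeffs (by norm_num))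
        (add_mem (sqrtIter_mem_nonnegCoeffs n) (sqrtIter_mem_nonnegCoeffs (n + 1)))) hd, ?_⟩
    rw [hsucc (n + 1)]
    linear_combination C (1 / 2) * (sqrtIter n + sqrtIter (n + 1)) * hdiff + hsucc n

end Polynomial

namespace ContinuousLinearMap

open Polynomial

variable {E : Type*} [NormedAddCommGroup E] [InnerProductSpace ℝ E] [CompleteSpace E]

lemma isPositive_pow_mul {B Z : E →L[ℝ] E} (hB : IsSelfAdjoint B) (hBZ : Commute B Z)
    (hZ : Z.IsPositive) (hBZ' : (B * Z).IsPositive) (k : ℕ) : (B ^ k * Z).IsPositive := by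
  induction k using Nat.twoStepInduction with
  | zero => simpa using hZ
  | one => simpa using hBZ'
  | more k ih _ =>
    have : B ^ (k + 2) * Z = B * (B ^ k * Z) * B := by
      rw [show k + 2 = 1 + k + 1 by ring, pow_succ, pow_add, pow_one, mul_assoc, mul_assoc,
        mul_assoc, mul_assoc, hBZ.eq]
    rw [this]
    exact ih.conj hB

lemma IsPositive.mul_one_sub {B : E →L[ℝ] E} (hB : B.IsPositive) (hB1 : B ≤ 1) :
    (B * (1 - B)).IsPositive := by
  have hB1' : (1 - B).IsPositive := hB1
  rw [show B * (1 - B) = B * (1 - B) * B + (1 - B) * B * (1 - B) by noncomm_ring]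
  exact (hB1'.conj hB.isSelfAdjoint).add (hB.conj hB1'.isSelfAdjoint)

lemma isPositive_aeval_mul {B Z : E →L[ℝ] E} (hB : IsSelfAdjoint B) (hBZ : Commute B Z)
    (hZ : Z.IsPositive) (hBZ' : (B * Z).IsPositive) {p : ℝ[X]} (hp : p ∈ nonnegCoeffs) :
    (aeval B p * Z).IsPositive := by
  rw [aeval_eq_sum_range, Finset.sum_mul]
  refine isPositive_sum _ fun k _ => ?_
  rw [smul_mul_assoc]
  exact (isPositive_pow_mul hB hBZ hZ hBZ' k).smul_of_nonneg (hp k)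

lemma aeval_sqrtIter_succ {A : Type*} [Ring A] [Algebra ℝ A] (B : A) (n : ℕ) :
    aeval B (sqrtIter (n + 1)) =
      (1 / 2 : ℝ) • (aeval B (sqrtIter n) * aeval B (sqrtIter n) + B) := by
  simp [sqrtIter, sq, Algebra.smul_def]

lemma isPositive_aeval_sqrtIter {B : E →L[ℝ] E} (hB : B.IsPositive) (n : ℕ) :
    (aeval B (sqrtIter n)).IsPositive := by
  simpa using isPositive_aeval_mul hB.isSelfAdjoint (Commute.one_right B) isPositive_one
    (by simpa using hB) (sqrtIter_mem_nonnegCoeffs n)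

lemma antitone_aeval_sqrtIter {B : E →L[ℝ] E} (hB : B.IsPositive) (hB1 : B ≤ 1) :
    Antitone fun n => aeval B (sqrtIter n) := antitone_nat_of_succ_le fun n => by
  obtain ⟨d, hd, hdiff⟩ := exists_sqrtIter_sub_succ n
  rw [le_def, ← map_sub, hdiff, map_mul, map_sub, map_one, aeval_X]
  exact isPositive_aeval_mul hB.isSelfAdjoint ((Commute.one_right B).sub_right (.refl B)) hB1
    (hB.mul_one_sub hB1) hd

/-- Products need not pass to strong limits, but the quadratic form of `Y n * Y n` is
`‖Y n x‖ ^ 2`, which does. -/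
lemma eq_smul_mul_self_add_of_tendsto {Y : ℕ → E →L[ℝ] E} {B L : E →L[ℝ] E}
    (hY : ∀ n, (Y n).IsPositive) (hB : B.IsPositive) (hL : L.IsPositive)
    (hrec : ∀ n, Y (n + 1) = (1 / 2 : ℝ) • (Y n * Y n + B))
    (hlim : ∀ x, Tendsto (fun n => Y n x) atTop (𝓝 (L x))) :
    L = (1 / 2 : ℝ) • (L * L + B) := by
  have hLL : (L * L).IsPositive := by simpa using isPositive_one.conj hL.isSelfAdjoint
  refine eq_of_forall_inner_eq hL.isSelfAdjoint
    ((hLL.add hB).smul_of_nonneg (by norm_num)).isSelfAdjoint fun x => ?_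
  have hform : ∀ Z : E →L[ℝ] E, Z.IsPositive →
      ⟪((1 / 2 : ℝ) • (Z * Z + B)) x, x⟫ = 1 / 2 * (‖Z x‖ ^ 2 + ⟪B x, x⟫) := fun Z hZ => by
    rw [smul_apply, real_inner_smul_left, add_apply, inner_add_left, mul_apply_eq_comp,
      hZ.inner_left_eq_inner_right, real_inner_self_eq_norm_sq]
  have h1 : Tendsto (fun n => ⟪Y (n + 1) x, x⟫) atTop (𝓝 ⟪L x, x⟫) :=
    ((hlim x).inner tendsto_const_nhds).comp (tendsto_add_atTop_nat 1)
  have h2 : Tendsto (fun n => ⟪Y (n + 1) x, x⟫) atTop (𝓝 (1 / 2 * (‖L x‖ ^ 2 + ⟪B x, x⟫))) := by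
    simp_rw [hrec, hform _ (hY _)]
    exact (((hlim x).norm.pow 2).add_const _).const_mul _
  rw [tendsto_nhds_unique h1 h2, hform L hL]

lemma exists_sqrt_of_le_one {C : E →L[ℝ] E} (hC : C.IsPositive) (hC1 : C ≤ 1) :
    ∃ S : E →L[ℝ] E, S.IsPositive ∧ S * S = C ∧ ∀ W, Commute W C → Commute W S := by
  set B := 1 - C
  have hB : B.IsPositive := hC1
  have hB1 : B ≤ 1 := by simpa [B, le_def] using hC
  set Y : ℕ → E →L[ℝ] E := fun n => aeval B (sqrtIter n)
  have hY0 : Y 0 = 1 := by simp [Y, sqrtIter]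
  obtain ⟨L, hL, hLY, hlim⟩ :=
    exists_tendsto_apply_of_antitone (isPositive_aeval_sqrtIter hB) (antitone_aeval_sqrtIter hB hB1)
  have hLL : L * L = (2 : ℝ) • L - B := by
    conv_rhs => rw [eq_smul_mul_self_add_of_tendsto (isPositive_aeval_sqrtIter hB) hB hL
      (aeval_sqrtIter_succ B) hlim]
    rw [smul_smul]
    norm_num
  refine ⟨1 - L, hY0 ▸ hLY 0, ?_, fun W hWC => ?_⟩
  · calc (1 - L) * (1 - L) = 1 - (2 : ℝ) • L + L * L := by rw [two_smul]; noncomm_ring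
      _ = C := by rw [hLL]; simp [B]
  · have hWB : Commute W B := (Commute.one_right W).sub_right hWC
    have hWY : ∀ n, Commute W (Y n) := fun n => by
      induction n with
      | zero => exact hY0 ▸ Commute.one_right W
      | succ n ih =>
        simp only [Y, aeval_sqrtIter_succ]
        exact ((ih.mul_right ih).add_right hWB).smul_right _
    exact (Commute.one_right W).sub_right (commute_of_tendsto_apply hlim hWY)

lemma exists_sqrt {C : E →L[ℝ] E} (hC : C.IsPositive) :
    ∃ S : E →L[ℝ] E, S.IsPositive ∧ S * S = C ∧ ∀ W, Commute W C → Commute W S := by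
  set c : ℝ := (‖C‖ + 1)⁻¹
  have hc : 0 < c := by positivity
  have hcC : c • C ≤ 1 := by
    refine le_of_forall_inner_le (hC.smul_of_nonneg hc.le).isSelfAdjoint (.one _) fun x => ?_
    have hcnorm : c * ‖C‖ ≤ 1 := by
      rw [inv_mul_le_iff₀ (by positivity)]
      linarith
    rw [smul_apply, real_inner_smul_left, one_apply_eq_self, real_inner_self_eq_norm_sq]
    calc c * ⟪C x, x⟫ ≤ c * (‖C‖ * ‖x‖ ^ 2) := by gcongr; exact inner_apply_self_le C x
      _ ≤ ‖x‖ ^ 2 := by rw [← mul_assoc]; exact mul_le_of_le_one_left (by positivity) hcnorm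
  obtain ⟨S, hS, hSS, hW⟩ := exists_sqrt_of_le_one (hC.smul_of_nonneg hc.le) hcC
  refine ⟨(√c)⁻¹ • S, hS.smul_of_nonneg (by positivity), ?_,
    fun W hWC => (hW W (hWC.smul_right c)).smul_right _⟩
  rw [smul_mul_smul_comm, hSS, smul_smul, ← mul_inv, Real.mul_self_sqrt hc.le,
    inv_mul_cancel₀ hc.ne', one_smul]

lemma eq_of_mul_self_eq {R S : E →L[ℝ] E} (hR : R.IsPositive) (hS : S.IsPositive)
    (h : R * R = S * S) : R = S := by
  obtain ⟨Q, hQ, hQQ, hcomm⟩ := exists_sqrt (by simpa using isPositive_one.conj hS.isSelfAdjoint)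
  have key : ∀ P : E →L[ℝ] E, P.IsPositive → P * P = S * S → P = Q := fun P hP hPP =>
    eq_of_commute_of_mul_self_eq hP hQ
      (hcomm P (hPP ▸ (Commute.refl P).mul_right (Commute.refl P))) (hPP.trans hQQ.symm)
  rw [key R hR h, key S hS rfl]

end ContinuousLinearMap

namespace HilbertBasis

variable {E : Type*} [NormedAddCommGroup E] [InnerProductSpace ℝ E] {ι : Type*}
  (b : HilbertBasis ι ℝ E)

lemma hasSum_norm_inner_sq (z : E) : HasSum (fun i => ‖⟪b i, z⟫‖ ^ 2) (‖z‖ ^ 2) := by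
  have h := b.hasSum_inner_mul_inner z z
  rw [real_inner_self_eq_norm_sq] at h
  exact h.congr_fun fun i => by rw [Real.norm_eq_abs, sq_abs, sq, real_inner_comm z]

lemma summable_inner_apply_of_le {S T : E →L[ℝ] E} (hS : S.IsPositive) (h : S ≤ T)
    (hT : Summable fun i => ⟪T (b i), b i⟫) : Summable fun i => ⟪S (b i), b i⟫ :=
  hT.of_nonneg_of_le (fun _ => hS.inner_nonneg_left _)
    fun _ => ContinuousLinearMap.inner_le_inner_of_le h _

open ContinuousLinearMap in
lemma tendsto_tsum_inner_sub_apply_of_antitone {X : ℕ → E →L[ℝ] E} {L : E →L[ℝ] E}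
    (hL : L.IsPositive) (hX : Antitone X) (hLX : ∀ n, L ≤ X n)
    (hlim : ∀ x, Tendsto (fun n => X n x) atTop (𝓝 (L x)))
    (hsum : Summable fun i => ⟪X 0 (b i), b i⟫) :
    Tendsto (fun n => ∑' i, ⟪(X n - L) (b i), b i⟫) atTop (𝓝 0) := by
  have hptw : ∀ i, Tendsto (fun n => ⟪(X n - L) (b i), b i⟫) atTop (𝓝 0) := fun i => by
    simpa [inner_sub_left] using
      ((hlim (b i)).inner (tendsto_const_nhds (x := b i))).sub_const ⟪L (b i), b i⟫
  have hbound : ∀ n i, ‖⟪(X n - L) (b i), b i⟫‖ ≤ ⟪X 0 (b i), b i⟫ := fun n i => by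
    rw [Real.norm_of_nonneg ((hLX n).inner_nonneg_left _), sub_apply, inner_sub_left]
    linarith [inner_le_inner_of_le (hX (Nat.zero_le n)) (b i), hL.inner_nonneg_left (b i)]
  simpa using tendsto_tsum_of_dominated_convergence hsum hptw (.of_forall hbound)

variable [CompleteSpace E]

open ContinuousLinearMap in
lemma summable_norm_adjoint_apply_sq (X : E →L[ℝ] E) (hX : Summable fun i => ‖X (b i)‖ ^ 2) :
    Summable fun i => ‖adjoint X (b i)‖ ^ 2 := by
  have hparseval : ∀ i, HasSum (fun j => ‖⟪b i, X (b j)⟫‖ ^ 2) (‖adjoint X (b i)‖ ^ 2) :=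
    fun i => (b.hasSum_norm_inner_sq _).congr_fun fun j => by
      rw [adjoint_inner_right, real_inner_comm]
  refine summable_of_sum_le (c := ∑' j, ‖X (b j)‖ ^ 2) (fun _ => by positivity) fun s => ?_
  calc ∑ i ∈ s, ‖adjoint X (b i)‖ ^ 2
      = ∑ i ∈ s, ∑' j, ‖⟪b i, X (b j)⟫‖ ^ 2 :=
        Finset.sum_congr rfl fun i _ => (hparseval i).tsum_eq.symm
    _ = ∑' j, ∑ i ∈ s, ‖⟪b i, X (b j)⟫‖ ^ 2 :=
        (Summable.tsum_finsetSum fun i _ => (hparseval i).summable).symm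
    _ ≤ ∑' j, ‖X (b j)‖ ^ 2 :=
        Summable.tsum_le_tsum (fun j => b.orthonormal.sum_inner_products_le _)
          (summable_sum fun i _ => (hparseval i).summable) hX

open ContinuousLinearMap in
lemma summable_inner_adjoint_conj_apply {A : E →L[ℝ] E} (hA : A.IsPositive)
    (hAsum : Summable fun i => ⟪A (b i), b i⟫) (R : E →L[ℝ] E) :
    Summable fun i => ⟪(adjoint R * A * R) (b i), b i⟫ := by
  obtain ⟨Q, hQ, hQQ, -⟩ := exists_sqrt hA
  have hAQ : ∀ u, ⟪A u, u⟫ = ‖Q u‖ ^ 2 := fun u => by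
    rw [← hQQ, mul_apply_eq_comp, hQ.inner_left_eq_inner_right, real_inner_comm,
      real_inner_self_eq_norm_sq]
  have hRQ : Summable fun i => ‖(adjoint R * Q) (b i)‖ ^ 2 := by
    refine (hAsum.mul_left (‖adjoint R‖ ^ 2)).of_nonneg_of_le (fun _ => by positivity) fun i => ?_
    rw [hAQ, ← mul_pow]
    exact pow_le_pow_left₀ (norm_nonneg _) ((adjoint R).le_opNorm _) 2
  refine (b.summable_norm_adjoint_apply_sq _ hRQ).congr fun i => ?_
  rw [mul_def, adjoint_comp, adjoint_adjoint, hQ.isSelfAdjoint.adjoint_eq, comp_apply, ← hAQ,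
    mul_apply_eq_comp, mul_apply_eq_comp, adjoint_inner_left]

end HilbertBasis

namespace Orthonormal

open Submodule

variable {E : Type*} [NormedAddCommGroup E] [InnerProductSpace ℝ E] [CompleteSpace E]

lemma hasSum_inner_smul {ι : Type*} {e : ι → E} (he : Orthonormal ℝ e)
    {K : Submodule ℝ E} [K.HasOrthogonalProjection]
    (hK : (span ℝ (Set.range e)).topologicalClosure = K) (x : E) :
    HasSum (fun i => ⟪e i, x⟫ • e i) (K.starProjection x) := by
  have hKc : IsClosed (K : Set E) := hK ▸ isClosed_topologicalClosure _
  have : CompleteSpace K := hKc.completeSpace_coe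
  let e' : ι → K := fun i => ⟨e i, hK ▸ le_topologicalClosure _ (subset_span ⟨i, rfl⟩)⟩
  have he' : Orthonormal ℝ e' := by
    classical
    rw [orthonormal_iff_ite] at he ⊢
    exact fun i j => he i j
  have hsp : (span ℝ (Set.range e'))ᗮ = ⊥ := by
    refine eq_bot_iff.2 fun y hy => (mem_bot ℝ).2 (Subtype.ext ?_)
    have hy' : (y : E) ∈ Kᗮ := by
      rw [show Kᗮ = (span ℝ (Set.range e))ᗮ by rw [← hK, orthogonal_closure]]
      refine (isOrtho_span.2 ?_).ge (subset_span rfl)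
      rintro _ ⟨i, rfl⟩ _ rfl
      exact (mem_orthogonal _ _).1 hy (e' i) (subset_span ⟨i, rfl⟩)
    exact inner_self_eq_zero.1 (inner_right_of_mem_orthogonal y.2 hy')
  simpa [e'] using
    ((HilbertBasis.mkOfOrthogonalEqBot he' hsp).hasSum_orthogonalProjectionOnto x).mapL K.subtypeL

end Orthonormal

section Short

open ContinuousLinearMap

variable {E : Type*} [NormedAddCommGroup E] [InnerProductSpace ℝ E] [CompleteSpace E]

lemma IsShort.le_of_isShort_conj {A T X R : E →L[ℝ] E} {S : Submodule ℝ E}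
    (hT : IsShort A T S) (hX : IsShort (R * A * R) X S) (hR : IsSelfAdjoint R)
    (hRS : ∀ y ∈ S, R y = y) : T ≤ X := by
  obtain ⟨hTpos, hTA, hTS, -⟩ := hT
  refine hX.2.2.2 T hTpos ?_ hTS
  have := conj_le_conj hR hTA
  rwa [conj_eq_self_of_apply_mem hR hRS hTpos.isSelfAdjoint hTS] at this

lemma IsShort.tendsto_apply_of_conj {A T : E →L[ℝ] E} {S : Submodule ℝ E}
    [CompleteSpace S] {P Tn : ℕ → E →L[ℝ] E} (hT : IsShort A T S)
    (hTn : ∀ n, IsShort (P n * A * P n) (Tn n) S) (hP : ∀ n, IsSelfAdjoint (P n))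
    (hPlim : ∀ x, Tendsto (fun n => P n x) atTop (𝓝 x)) (hanti : Antitone Tn)
    (hle : ∀ n, T ≤ Tn n) (x : E) : Tendsto (fun n => Tn n x) atTop (𝓝 (T x)) := by
  obtain ⟨L, hL, -, hlim⟩ := exists_tendsto_apply_of_antitone (fun n => (hTn n).1) hanti
  have hLS : ∀ x, L x ∈ S := fun x =>
    (completeSpace_coe_iff_isComplete.1 ‹_›).isClosed.mem_of_tendsto (hlim x)
      (.of_forall fun n => (hTn n).2.2.1 x)
  have hA : IsSelfAdjoint A := by simpa using hT.2.1.isSelfAdjoint.add hT.1.isSelfAdjoint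
  have hLA : L ≤ A := by
    refine le_of_forall_inner_le hL.isSelfAdjoint hA fun y => ?_
    refine le_of_tendsto_of_tendsto' ((hlim y).inner tendsto_const_nhds)
      (((A.continuous.tendsto y).comp (hPlim y)).inner (hPlim y)) fun n => ?_
    exact (inner_le_inner_of_le (hTn n).2.1 y).trans_eq ((hP n).isSymmetric _ _)
  have hLT : L = T :=
    le_antisymm (hT.2.2.2 L hL hLA hLS) (le_of_tendsto_apply hlim (.of_forall hle))
  exact hLT ▸ hlim x

end Short

section Truncation

variable {E : Type*} [NormedAddCommGroup E] [InnerProductSpace ℝ E]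
  (H1 : Submodule ℝ E) [CompleteSpace H1] (e : ℕ → E)

lemma Pn_apply (n : ℕ) (x : E) :
    Pn H1 e n x = H1.starProjection x + ∑ i ∈ Finset.range n, ⟪e i, x⟫ • e i := by
  simp only [Pn, projFin, add_apply, sum_apply, ContinuousLinearMap.smulRight_apply,
    innerSL_apply_apply]
  rfl

lemma Pn_zero : Pn H1 e 0 = H1.starProjection := by
  ext x
  simp [Pn_apply]

variable {H1 e}

lemma Pn_apply_of_mem (hemem : ∀ k, e k ∈ H1ᗮ) (n : ℕ) {y : E} (hy : y ∈ H1) :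
    Pn H1 e n y = y := by
  simp [Pn_apply, Submodule.starProjection_eq_self_iff.2 hy,
    Submodule.inner_left_of_mem_orthogonal hy (hemem _)]

lemma Pn_apply_of_lt (he : Orthonormal ℝ e) (hemem : ∀ k, e k ∈ H1ᗮ) {i n : ℕ} (hin : i < n) :
    Pn H1 e n (e i) = e i := by
  classical
  simp [Pn_apply, (Submodule.starProjection_apply_eq_zero_iff H1).2 (hemem i),
    orthonormal_iff_ite.1 he, Finset.sum_ite_eq', hin]

variable [CompleteSpace E]

variable (H1 e) in
lemma isSelfAdjoint_Pn (n : ℕ) : IsSelfAdjoint (Pn H1 e n) := by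
  refine ContinuousLinearMap.isSelfAdjoint_iff_isSymmetric.2 fun x y => ?_
  simp only [ContinuousLinearMap.coe_coe, Pn_apply, inner_add_left, inner_add_right, sum_inner,
    inner_sum, real_inner_smul_left, real_inner_smul_right,
    Submodule.inner_starProjection_left_eq_right]
  exact congrArg _ (Finset.sum_congr rfl fun i _ => by rw [real_inner_comm x, mul_comm])

lemma tendsto_Pn_apply (he : Orthonormal ℝ e)
    (hspan : (Submodule.span ℝ (Set.range e)).topologicalClosure = H1ᗮ) (x : E) :
    Tendsto (fun n => Pn H1 e n x) atTop (𝓝 x) := by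
  have hsum := (he.hasSum_inner_smul hspan x).tendsto_sum_nat
  simpa [Pn_apply, Submodule.starProjection_orthogonal'] using
    (tendsto_const_nhds (x := H1.starProjection x)).add hsum

lemma Pn_mul_Pn_of_le (he : Orthonormal ℝ e) (hemem : ∀ k, e k ∈ H1ᗮ) {n m : ℕ} (hnm : n ≤ m) :
    Pn H1 e m * Pn H1 e n = Pn H1 e n ∧ Pn H1 e n * Pn H1 e m = Pn H1 e n := by
  have h : Pn H1 e m * Pn H1 e n = Pn H1 e n := by
    ext x
    rw [mul_apply_eq_comp, Pn_apply H1 e n x, map_add, map_sum,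
      Pn_apply_of_mem hemem m (H1.starProjection_apply_mem x)]
    refine congrArg _ (Finset.sum_congr rfl fun i hi => ?_)
    rw [map_smul, Pn_apply_of_lt he hemem ((Finset.mem_range.1 hi).trans_le hnm)]
  refine ⟨h, ?_⟩
  simpa [(isSelfAdjoint_Pn H1 e n).star_eq, (isSelfAdjoint_Pn H1 e m).star_eq] using congrArg star h

lemma Pn_conj_Pn_conj_of_le (he : Orthonormal ℝ e) (hemem : ∀ k, e k ∈ H1ᗮ) (A : E →L[ℝ] E)
    {n m : ℕ} (hnm : n ≤ m) :
    Pn H1 e n * (Pn H1 e m * A * Pn H1 e m) * Pn H1 e n = Pn H1 e n * A * Pn H1 e n := by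
  obtain ⟨h1, h2⟩ := Pn_mul_Pn_of_le he hemem hnm
  calc _ = Pn H1 e n * Pn H1 e m * A * (Pn H1 e m * Pn H1 e n) := by simp only [mul_assoc]
    _ = _ := by rw [h1, h2]

end Truncation

/-- Trace class is expressed, for a positive operator `A`, as summability of `⟪A (b i), b i⟫`
over a Hilbert basis `b`; the trace norm `‖Tⁿ − T‖₁` is `∑' i, ⟪S n (b i), b i⟫` with
`S n = |Tⁿ − T|`, the positive square root of `(Tⁿ − T)* (Tⁿ − T)`. -/
theorem short_truncation_tendsto_traceNorm_general
    (H1 : Submodule ℝ H) [CompleteSpace H1]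
    (ι : Type*) (b : HilbertBasis ι ℝ H)
    (A : H →L[ℝ] H) (hA : A.IsPositive)
    (hAtrace : Summable fun i => ⟪A (b i), b i⟫)
    (e : ℕ → H) (he : Orthonormal ℝ e) (hemem : ∀ k, e k ∈ H1ᗮ)
    (hspan : (Submodule.span ℝ (Set.range e)).topologicalClosure = H1ᗮ)
    (Tn : ℕ → H →L[ℝ] H)
    (hTn : ∀ n, IsShort (Pn H1 e n * A * Pn H1 e n) (Tn n) H1)
    (T : H →L[ℝ] H) (hT : IsShort A T H1) :
    (Summable fun i => ⟪T (b i), b i⟫) ∧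
    (∀ n, Summable fun i => ⟪Tn n (b i), b i⟫) ∧
    ∀ S : ℕ → H →L[ℝ] H,
      (∀ n, (S n).IsPositive ∧
        S n * S n = ContinuousLinearMap.adjoint (Tn n - T) * (Tn n - T)) →
      (∀ n, Summable fun i => ⟪S n (b i), b i⟫) ∧
        Tendsto (fun n => ∑' i, ⟪S n (b i), b i⟫) atTop (𝓝 0) := by
  have hPfix : ∀ n, ∀ y ∈ H1, Pn H1 e n y = y := fun n _ => Pn_apply_of_mem hemem n
  have hle : ∀ n, T ≤ Tn n := fun n =>
    hT.le_of_isShort_conj (hTn n) (isSelfAdjoint_Pn H1 e n) (hPfix n)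
  have hanti : Antitone Tn := antitone_nat_of_succ_le fun n =>
    (hTn (n + 1)).le_of_isShort_conj (Pn_conj_Pn_conj_of_le he hemem A n.le_succ ▸ hTn n)
      (isSelfAdjoint_Pn H1 e n) (hPfix n)
  have hsum0 : Summable fun i => ⟪Tn 0 (b i), b i⟫ := by
    refine b.summable_inner_apply_of_le (hTn 0).1 (hTn 0).2.1 ?_
    simpa [Pn_zero, (isSelfAdjoint_starProjection H1).adjoint_eq] using
      b.summable_inner_adjoint_conj_apply hA hAtrace H1.starProjection
  have hsumTn : ∀ n, Summable fun i => ⟪Tn n (b i), b i⟫ := fun n =>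
    b.summable_inner_apply_of_le (hTn n).1 (hanti n.zero_le) hsum0
  have hsumT := b.summable_inner_apply_of_le hT.1 (hle 0) hsum0
  refine ⟨hsumT, hsumTn, fun S hS => ?_⟩
  have hSeq : ∀ n, S n = Tn n - T := fun n =>
    ContinuousLinearMap.eq_of_mul_self_eq (hS n).1 (hle n) <| by
      rw [(hS n).2, (ContinuousLinearMap.IsPositive.isSelfAdjoint (hle n)).adjoint_eq]
  simp only [hSeq]
  refine ⟨fun n => ((hsumTn n).sub hsumT).congr fun i => by simp [inner_sub_left], ?_⟩
  exact b.tendsto_tsum_inner_sub_apply_of_antitone hT.1 hanti hle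
    (hT.tendsto_apply_of_conj hTn (isSelfAdjoint_Pn H1 e) (tendsto_Pn_apply he hspan) hanti hle)
    hsum0

/-- If `A` is in addition trace class (expressed, for the positive
operator `A`, as summability of `⟪A (b i), b i⟫` over a Hilbert basis `b`), then the
shorts `Tⁿ` of `Aⁿ = Pⁿ A Pⁿ` and the short `T` of `A` to `H1` are trace class and
`‖Tⁿ − T‖₁ → 0`, where the trace norm is `∑' i, ⟪S i, b i⟫` computed with the absolute
value `Sₙ = |Tⁿ − T|`, i.e. the positive square root of `(Tⁿ − T)* (Tⁿ − T)`. -/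
theorem short_truncation_tendsto_traceNorm
    [SecondCountableTopology H]
    (H1 : Submodule ℝ H) [CompleteSpace H1]
    (ι : Type*) (b : HilbertBasis ι ℝ H)
    (A : H →L[ℝ] H) (hA : A.IsPositive)
    (hAtrace : Summable fun i => ⟪A (b i), b i⟫)
    (e : ℕ → H) (he : Orthonormal ℝ e) (hemem : ∀ k, e k ∈ H1ᗮ)
    (hspan : (Submodule.span ℝ (Set.range e)).topologicalClosure = H1ᗮ)
    (Tn : ℕ → H →L[ℝ] H)
    (hTn : ∀ n, IsShort (Pn H1 e n * A * Pn H1 e n) (Tn n) H1)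
    (T : H →L[ℝ] H) (hT : IsShort A T H1) :
    (Summable fun i => ⟪T (b i), b i⟫) ∧
    (∀ n, Summable fun i => ⟪Tn n (b i), b i⟫) ∧
    ∀ S : ℕ → H →L[ℝ] H,
      (∀ n, (S n).IsPositive ∧
        S n * S n = ContinuousLinearMap.adjoint (Tn n - T) * (Tn n - T)) →
      (∀ n, Summable fun i => ⟪S n (b i), b i⟫) ∧
        Tendsto (fun n => ∑' i, ⟪S n (b i), b i⟫) atTop (𝓝 0) :=
  short_truncation_tendsto_traceNorm_general H1 ι b A hA hAtrace e he hemem hspan Tn hTn T hT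

end
end

section
/- Let μ be a Gaussian measure on an orthogonal direct sum H = H1 ⊕ H2 of separable real Hilbert spaces, fix an ordered orthonormal basis of H2, and set μₙ := (Pⁿ)_*μ. Let f : H → H be Borel measurable and square Bochner integrable with respect to μ with f ∘ Pⁿ = f. Then E_μ[f | F2ⁿ] is a version of the conditional expectation of f given F2 under μₙ: E_{μₙ}[f | F2] = E_μ[f | F2ⁿ] holds μₙ-almost everywhere. -/
open MeasureTheory ProbabilityTheory Filter Topology
open scoped RealInnerProductSpace

noncomputable section

/-- Gaussian measure on a real inner product space. -/
def IsGaussianMeasure {E : Type*} [NormedAddCommGroup E] [InnerProductSpace ℝ E]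
    [MeasurableSpace E] (μ : Measure E) : Prop :=
  IsProbabilityMeasure μ ∧ ∀ h : E, ∃ (m : ℝ) (v : NNReal),
    μ.map (fun x => ⟪h, x⟫) = gaussianReal m v

variable {H : Type*} [NormedAddCommGroup H] [InnerProductSpace ℝ H] [CompleteSpace H]

/-- The sub-σ-algebra of the Borel σ-algebra of `H` generated by the orthogonal
projection onto `H2 = H1ᗮ`. -/
def F2 [MeasurableSpace H] (H1 : Submodule ℝ H) [CompleteSpace H1] : MeasurableSpace H :=
  MeasurableSpace.comap (fun x => projL H1ᗮ x) inferInstance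

/-- The sub-σ-algebra of the Borel σ-algebra of `H` generated by `P_{H2ⁿ} ∘ P2`. -/
def F2n [MeasurableSpace H] (H1 : Submodule ℝ H) [CompleteSpace H1]
    (e : ℕ → H) (n : ℕ) : MeasurableSpace H :=
  MeasurableSpace.comap (fun x => projFin e n (projL H1ᗮ x)) inferInstance

/-! `(Pⁿ)⁻¹` maps `F2` into `F2ⁿ`, and every `F2ⁿ`-set is `Pⁿ`-invariant because
`P_{H2ⁿ} ∘ P2 ∘ Pⁿ = P_{H2ⁿ} ∘ P2`; hence `g := E_μ[f | F2ⁿ]` satisfies `g ∘ Pⁿ = g`.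
For `s ∈ F2`, a change of variables and `f ∘ Pⁿ = f` turn `∫_s g dμₙ = ∫_s f dμₙ` into
`∫_{(Pⁿ)⁻¹ s} g dμ = ∫_{(Pⁿ)⁻¹ s} f dμ`, the defining property of `g`. -/

namespace MeasureTheory

theorem StronglyMeasurable.apply_eq_of_forall_preimage_eq {α β : Type*} [TopologicalSpace β]
    [T2Space β] {m : MeasurableSpace α} {P : α → α}
    (hP : ∀ s, MeasurableSet[m] s → P ⁻¹' s = s) {g : α → β} (hg : StronglyMeasurable[m] g)
    (x : α) : g (P x) = g x := by
  have h_simple (φ : @SimpleFunc α m β) (y : α) : φ (P y) = φ y := by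
    have hy : y ∈ P ⁻¹' (φ ⁻¹' {φ y}) := by rw [hP _ (φ.measurableSet_fiber _)]; rfl
    exact hy
  exact tendsto_nhds_unique (by simpa only [h_simple] using hg.tendsto_approx (P x))
    (hg.tendsto_approx x)

theorem condExp_map_ae_eq_condExp {α E : Type*} [NormedAddCommGroup E] [NormedSpace ℝ E]
    [CompleteSpace E] {m m' mα : MeasurableSpace α} {μ : Measure[mα] α} [IsFiniteMeasure μ]
    {P : α → α} {f : α → E} (hm : m ≤ mα) (hm' : m' ≤ m) (hP : Measurable P)
    (hPm : Measurable[m', m] P) (hPinv : ∀ s, MeasurableSet[m'] s → P ⁻¹' s = s)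
    (hf : AEStronglyMeasurable f (μ.map P)) (hfμ : Integrable f μ) (hfP : ∀ x, f (P x) = f x) :
    (μ.map P)[f|m] =ᵐ[μ.map P] μ[f|m'] := by
  set g := μ[f|m']
  have hg : StronglyMeasurable[m'] g := stronglyMeasurable_condExp
  have hgP : ∀ x, g (P x) = g x := hg.apply_eq_of_forall_preimage_eq hPinv
  have hg_map : AEStronglyMeasurable g (μ.map P) := (hg.mono (hm'.trans hm)).aestronglyMeasurable
  have hf_map : Integrable f (μ.map P) := by
    rwa [integrable_map_measure hf hP.aemeasurable, Function.comp_def, funext hfP]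
  have hg_int : Integrable g (μ.map P) := by
    rw [integrable_map_measure hg_map hP.aemeasurable, Function.comp_def, funext hgP]
    exact integrable_condExp
  refine (ae_eq_condExp_of_forall_setIntegral_eq hm hf_map (fun s _ _ => hg_int.integrableOn)
    (fun s hs _ => ?_) (hg.mono hm').aestronglyMeasurable).symm
  rw [setIntegral_map (hm s hs) hg_map hP.aemeasurable,
    setIntegral_map (hm s hs) hf hP.aemeasurable]
  simp only [hgP, hfP]
  exact setIntegral_condExp (hm'.trans hm) hfμ (hPm hs)

end MeasureTheory

omit [CompleteSpace H] in
theorem projL_apply (S : Submodule ℝ H) [CompleteSpace S] (x : H) :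
    projL S x = S.starProjection x := rfl

omit [CompleteSpace H] in
theorem projFin_apply (e : ℕ → H) (n : ℕ) (x : H) :
    projFin e n x = ∑ i ∈ Finset.range n, ⟪e i, x⟫ • e i := by
  simp [projFin]

omit [CompleteSpace H] in
theorem projFin_mem {K : Submodule ℝ H} {e : ℕ → H} (he : ∀ k, e k ∈ K) (n : ℕ) (x : H) :
    projFin e n x ∈ K := by
  rw [projFin_apply]
  exact Submodule.sum_mem _ fun i _ => Submodule.smul_mem _ _ (he i)

omit [CompleteSpace H] in
theorem projFin_projFin {e : ℕ → H} (he : Orthonormal ℝ e) (n : ℕ) (x : H) :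
    projFin e n (projFin e n x) = projFin e n x := by
  rw [projFin_apply e n (projFin e n x), projFin_apply e n x]
  refine Finset.sum_congr rfl fun i hi => ?_
  rw [he.inner_right_sum (fun j => ⟪e j, x⟫) hi]

omit [CompleteSpace H] in
theorem projFin_projL {K : Submodule ℝ H} [CompleteSpace K] {e : ℕ → H} (he : ∀ k, e k ∈ K)
    (n : ℕ) (x : H) : projFin e n (projL K x) = projFin e n x := by
  simp only [projFin_apply, projL_apply]
  refine Finset.sum_congr rfl fun i _ => ?_
  rw [← K.inner_starProjection_left_eq_right, K.starProjection_eq_self_iff.mpr (he i)]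

section Truncation

variable {H1 : Submodule ℝ H} [CompleteSpace H1] {e : ℕ → H} {n : ℕ}

theorem projL_orthogonal_Pn (hemem : ∀ k, e k ∈ H1ᗮ) (x : H) :
    projL H1ᗮ (Pn H1 e n x) = projFin e n x := by
  simp only [Pn, add_apply, map_add, projL_apply]
  rw [Submodule.starProjection_orthogonal_apply_eq_zero (H1.starProjection_apply_mem x),
    Submodule.starProjection_eq_self_iff.mpr (projFin_mem hemem n x), zero_add]

theorem projFin_Pn (he : Orthonormal ℝ e) (hemem : ∀ k, e k ∈ H1ᗮ) (x : H) :
    projFin e n (Pn H1 e n x) = projFin e n x := by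
  rw [← projFin_projL hemem, projL_orthogonal_Pn hemem, projFin_projFin he]

variable [MeasurableSpace H]

theorem F2n_eq_comap_projFin (hemem : ∀ k, e k ∈ H1ᗮ) :
    F2n H1 e n = MeasurableSpace.comap (projFin e n) ‹MeasurableSpace H› := by
  simp only [F2n, projFin_projL hemem]

theorem F2_le [BorelSpace H] : F2 H1 ≤ ‹MeasurableSpace H› :=
  (projL H1ᗮ).continuous.measurable.comap_le

theorem F2n_le_F2 [BorelSpace H] : F2n H1 e n ≤ F2 H1 :=
  MeasurableSpace.comap_le_comap_of_eq_comp _ (projFin e n).continuous.measurable rfl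

theorem measurable_Pn_F2n_F2 (hemem : ∀ k, e k ∈ H1ᗮ) :
    Measurable[F2n H1 e n, F2 H1] (Pn H1 e n) := by
  rw [F2n_eq_comap_projFin hemem, measurable_iff_comap_le, F2, MeasurableSpace.comap_comp]
  simp only [Function.comp_def, projL_orthogonal_Pn hemem, le_refl]

theorem preimage_Pn_of_measurableSet_F2n (he : Orthonormal ℝ e) (hemem : ∀ k, e k ∈ H1ᗮ)
    {s : Set H} (hs : MeasurableSet[F2n H1 e n] s) : Pn H1 e n ⁻¹' s = s := by
  rw [F2n_eq_comap_projFin hemem] at hs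
  obtain ⟨t, -, rfl⟩ := hs
  ext x
  simp only [Set.mem_preimage, projFin_Pn he hemem]

end Truncation

theorem condexp_map_eq_condexp_truncated_sigmaAlgebra_general
    [SecondCountableTopology H] [MeasurableSpace H] [BorelSpace H]
    (H1 : Submodule ℝ H) [CompleteSpace H1]
    (μ : Measure H) (hGauss : IsGaussianMeasure μ)
    (e : ℕ → H) (he : Orthonormal ℝ e) (hemem : ∀ k, e k ∈ H1ᗮ)
    (n : ℕ)
    (f : H → H) (hfmeas : Measurable f) (hf2 : MemLp f 2 μ)
    (hfPn : ∀ x, f (Pn H1 e n x) = f x) :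
    (μ.map (fun x => Pn H1 e n x))[f|F2 H1]
      =ᵐ[μ.map (fun x => Pn H1 e n x)] μ[f|F2n H1 e n] := by
  have := hGauss.1
  exact condExp_map_ae_eq_condExp F2_le F2n_le_F2 (Pn H1 e n).continuous.measurable
    (measurable_Pn_F2n_F2 hemem) (fun _ => preimage_Pn_of_measurableSet_F2n he hemem)
    hfmeas.aestronglyMeasurable (hf2.integrable one_le_two) hfPn

/-- For `μₙ := (Pⁿ)_*μ` and `f` square Bochner integrable with
`f ∘ Pⁿ = f`, the conditional expectation `E_μ[f | F2ⁿ]` is a version of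
`E_{μₙ}[f | F2]`. -/
theorem condexp_map_eq_condexp_truncated_sigmaAlgebra
    [SecondCountableTopology H] [MeasurableSpace H] [BorelSpace H]
    (H1 : Submodule ℝ H) [CompleteSpace H1]
    (μ : Measure H) (hGauss : IsGaussianMeasure μ)
    (e : ℕ → H) (he : Orthonormal ℝ e) (hemem : ∀ k, e k ∈ H1ᗮ)
    (hspan : (Submodule.span ℝ (Set.range e)).topologicalClosure = H1ᗮ)
    (n : ℕ)
    (f : H → H) (hfmeas : Measurable f) (hf2 : MemLp f 2 μ)
    (hfPn : ∀ x, f (Pn H1 e n x) = f x) :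
    (μ.map (fun x => Pn H1 e n x))[f|F2 H1]
      =ᵐ[μ.map (fun x => Pn H1 e n x)] μ[f|F2n H1 e n] :=
  condexp_map_eq_condexp_truncated_sigmaAlgebra_general H1 μ hGauss e he hemem n f hfmeas hf2 hfPn

end
end
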